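/- Let θ = (𝕋, 𝕆, μ₁) and θ̂ = (𝕋̂, 𝕆̂, μ̂₁) be two POMDP parameter triples with S ≤ O such that every 𝕆_h has full column rank and σ_min(𝕆̂_h) ≥ α > 0 for every h. Let π be a deterministic policy and h ≥ 1. Then Σ_{τ_h ∈ Γ(π,h)} ‖b(τ_h; θ) − b(τ_h; θ̂)‖₁ ≤ (√S/α) ‖b₀(θ) − b₀(θ̂)‖₁ + (√S/α) Σ_{(a,o) ∈ 𝒜×𝒪} ‖(B₁(a, o; θ̂) − B₁(a, o; θ)) b₀(θ)‖₁ + (√S/α) Σ_{j=2}^{h} Σ_{(a, ã, o) ∈ 𝒜²×𝒪} Σ_{s ∈ 𝒮} ‖(B_j(a, o; θ̂) − B_j(a, o; θ)) (𝕆_j 𝕋_{j−1}(ã))_s‖₁ · Pr^π_θ(s_{j−1} = s), where (𝕆_j 𝕋_{j−1}(ã))_s denotes the s-th column of 𝕆_j 𝕋_{j−1}(ã). -/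

import Mathlib

open Matrix BigOperators
open scoped Classical

noncomputable section

/-- The entrywise ℓ¹-norm of a finite vector. -/
def l1norm {n : ℕ} (v : Fin n → ℝ) : ℝ := ∑ i, |v i|

/-- The Euclidean (ℓ²) norm of a finite vector. -/
def l2norm {n : ℕ} (v : Fin n → ℝ) : ℝ := Real.sqrt (∑ i, (v i) ^ 2)

/-- The smallest singular value of a matrix, i.e. the infimum of `‖M x‖₂`
over unit vectors `x`. -/
def sigmaMin {m n : ℕ} (M : Matrix (Fin m) (Fin n) ℝ) : ℝ :=
  sInf {r : ℝ | ∃ x : Fin n → ℝ, l2norm x = 1 ∧ r = l2norm (M.mulVec x)}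

/-- The Moore–Penrose pseudoinverse of a full-column-rank matrix:
`M† = (Mᵀ M)⁻¹ Mᵀ`. -/
def pinvFC {m n : ℕ} (M : Matrix (Fin m) (Fin n) ℝ) : Matrix (Fin n) (Fin m) ℝ :=
  (Mᵀ * M)⁻¹ * Mᵀ

/-- A POMDP parameter triple `θ = (𝕋, 𝕆, μ₁)`: column-stochastic transition
matrices `𝕋_h(a) ∈ ℝ^{S×S}` (entry `(s', s)` is `𝕋_h(s'|s,a)`), observation
matrices `𝕆_h ∈ ℝ^{O×S}` with probability-vector columns, and an initial
distribution `μ₁ ∈ ℝ^S`.  Steps are indexed by `ℕ` (1-based). -/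
structure POMDPParams (S A O : ℕ) where
  T : ℕ → Fin A → Matrix (Fin S) (Fin S) ℝ
  Ob : ℕ → Matrix (Fin O) (Fin S) ℝ
  mu1 : Fin S → ℝ
  T_nonneg : ∀ h a s' s, 0 ≤ T h a s' s
  T_colsum : ∀ h a s, ∑ s', T h a s' s = 1
  Ob_nonneg : ∀ h o s, 0 ≤ Ob h o s
  Ob_colsum : ∀ h s, ∑ o, Ob h o s = 1
  mu1_nonneg : ∀ s, 0 ≤ mu1 s
  mu1_sum : ∑ s, mu1 s = 1

namespace POMDPParams

variable {S A O : ℕ}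

/-- The observable operator `B_h(a, o; θ) = 𝕆_{h+1} 𝕋_h(a) diag(𝕆_h(o|·)) 𝕆_h†`. -/
def Bop (θ : POMDPParams S A O) (h : ℕ) (a : Fin A) (o : Fin O) :
    Matrix (Fin O) (Fin O) ℝ :=
  θ.Ob (h + 1) * θ.T h a * Matrix.diagonal (fun s => θ.Ob h o s) * pinvFC (θ.Ob h)

/-- The initial observable-operator vector `b₀(θ) = 𝕆₁ μ₁`. -/
def bvec0 (θ : POMDPParams S A O) : Fin O → ℝ := (θ.Ob 1).mulVec θ.mu1

/-- A length-`h` trajectory `τ_h = (a_h, o_h, …, a₁, o₁)` is encoded as a map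
`Fin h → Fin A × Fin O`, index `i` holding the pair `(a_{i+1}, o_{i+1})`. -/
abbrev Traj (A O h : ℕ) := Fin h → Fin A × Fin O

/-- The unnormalized belief
`b(τ_h; θ) = B_h(a_h, o_h; θ) ⋯ B₁(a₁, o₁; θ) b₀(θ)`. -/
def belief (θ : POMDPParams S A O) : (h : ℕ) → Traj A O h → Fin O → ℝ
  | 0, _ => θ.bvec0
  | h + 1, τ =>
      (θ.Bop (h + 1) (τ (Fin.last h)).1 (τ (Fin.last h)).2).mulVec
        (θ.belief h (fun i : Fin h => τ i.castSucc))

/-- `stateBelief θ h τ s = Pr_θ(o_h, …, o₁, s_{h+1} = s | a_h, …, a₁)`, the joint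
probability of the observations of `τ` together with reaching state `s` at step
`h+1`, given the actions of `τ`. -/
def stateBelief (θ : POMDPParams S A O) : (h : ℕ) → Traj A O h → Fin S → ℝ
  | 0, _ => θ.mu1
  | h + 1, τ =>
      (θ.T (h + 1) (τ (Fin.last h)).1).mulVec
        (fun s => θ.Ob (h + 1) (τ (Fin.last h)).2 s *
          θ.stateBelief h (fun i : Fin h => τ i.castSucc) s)

/-- The conditional trajectory probability
`p(τ_h; θ) = Pr_θ(o_h, …, o₁ | a_{h−1}, …, a₁)`
(the last action of `τ_h` is irrelevant). -/
def trajProb (θ : POMDPParams S A O) : (h : ℕ) → Traj A O h → ℝ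
  | 0, _ => 1
  | h + 1, τ =>
      ∑ s, θ.Ob (h + 1) (τ (Fin.last h)).2 s *
        θ.stateBelief h (fun i : Fin h => τ i.castSucc) s

end POMDPParams

/-- A deterministic policy: given the length-`n` past history (most recent pair
first corresponds to index `n-1`) and the current observation, produce the
action for step `n+1`. -/
def Policy (A O : ℕ) := ∀ n : ℕ, (Fin n → Fin A × Fin O) → Fin O → Fin A

/-- A trajectory is admissible for `π` (i.e. lies in `Γ(π, h)`) if each of its
actions is the one `π` assigns to the preceding history. -/
def IsAdm {A O : ℕ} (π : Policy A O) {h : ℕ} (τ : POMDPParams.Traj A O h) : Prop :=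
  ∀ j : Fin h, (τ j).1 = π j.val (fun i : Fin j.val => τ (Fin.castLE j.isLt.le i)) (τ j).2

/-- `Γ(π, h)`: the finite set of length-`h` trajectories admissible for `π`. -/
noncomputable def GammaF {A O : ℕ} (π : Policy A O) (h : ℕ) :
    Finset (POMDPParams.Traj A O h) :=
  Finset.univ.filter (fun τ => IsAdm π τ)

/-- The state visitation probability `Pr^π_θ(s_h = s)` (for `h ≥ 1`). -/
noncomputable def visitProb {S A O : ℕ} (θ : POMDPParams S A O) (π : Policy A O)
    (h : ℕ) (s : Fin S) : ℝ :=
  ∑ τ ∈ GammaF π (h - 1), θ.stateBelief (h - 1) τ s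

/-- The trajectory induced by a deterministic policy `π` on an observation
sequence: actions are filled in by `π`. -/
def trajOf {A O : ℕ} (π : Policy A O) : (h : ℕ) → (Fin h → Fin O) → POMDPParams.Traj A O h
  | 0, _ => Fin.elim0
  | h + 1, ω =>
      Fin.snoc (trajOf π h (fun i : Fin h => ω i.castSucc))
        (π h (trajOf π h (fun i : Fin h => ω i.castSucc)) (ω (Fin.last h)), ω (Fin.last h))

section Aux

lemma l1norm_nonneg {n : ℕ} (v : Fin n → ℝ) : 0 ≤ l1norm v :=
  Finset.sum_nonneg fun i _ => abs_nonneg _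

lemma l1norm_add_le {n : ℕ} (u v : Fin n → ℝ) : l1norm (u + v) ≤ l1norm u + l1norm v := by
  unfold l1norm
  calc ∑ i, |(u+v) i| ≤ ∑ i, (|u i| + |v i|) := Finset.sum_le_sum fun i _ => abs_add_le _ _
    _ = _ := Finset.sum_add_distrib

lemma l1norm_sub_comm {n : ℕ} (u v : Fin n → ℝ) : l1norm (u - v) = l1norm (v - u) := by
  unfold l1norm; congr 1; funext i; simp [abs_sub_comm]

lemma l2norm_nonneg {n : ℕ} (v : Fin n → ℝ) : 0 ≤ l2norm v := Real.sqrt_nonneg _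

lemma l2norm_sq {n : ℕ} (v : Fin n → ℝ) : (l2norm v) ^ 2 = ∑ i, (v i) ^ 2 := by
  rw [l2norm, Real.sq_sqrt]; exact Finset.sum_nonneg fun i _ => sq_nonneg _

lemma l1norm_le_sqrt_mul_l2norm {n : ℕ} (v : Fin n → ℝ) :
    l1norm v ≤ Real.sqrt n * l2norm v := by
  have h : (l1norm v) ^ 2 ≤ (n : ℝ) * ∑ i, (v i) ^ 2 := by
    have := Finset.sum_mul_sq_le_sq_mul_sq Finset.univ (fun _ : Fin n => (1 : ℝ))
      (fun i => |v i|)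
    simpa [l1norm, sq_abs, Finset.card_univ] using this
  have h2 : l1norm v ≤ Real.sqrt ((n : ℝ) * ∑ i, (v i) ^ 2) := by
    rw [← Real.sqrt_sq (l1norm_nonneg v)]
    exact Real.sqrt_le_sqrt h
  calc l1norm v ≤ Real.sqrt ((n : ℝ) * ∑ i, (v i) ^ 2) := h2
    _ = Real.sqrt n * l2norm v := by
        rw [Real.sqrt_mul (Nat.cast_nonneg n), l2norm]

lemma l2norm_le_l1norm {n : ℕ} (v : Fin n → ℝ) : l2norm v ≤ l1norm v := by
  rw [l2norm]
  rw [show (l1norm v) = Real.sqrt ((l1norm v)^2) from (Real.sqrt_sq (l1norm_nonneg v)).symm]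
  apply Real.sqrt_le_sqrt
  calc ∑ i, (v i)^2 = ∑ i, |v i|^2 := by simp [sq_abs]
    _ ≤ (∑ i, |v i|)^2 := by
        apply Finset.sum_sq_le_sq_sum_of_nonneg
        intro i _; exact abs_nonneg _
    _ = (l1norm v)^2 := rfl

lemma l2norm_smul {n : ℕ} (c : ℝ) (v : Fin n → ℝ) : l2norm (c • v) = |c| * l2norm v := by
  rw [l2norm, l2norm]
  have : ∑ i, (c * v i)^2 = c^2 * ∑ i, (v i)^2 := by
    rw [Finset.mul_sum]; congr 1; funext i; ring
  simp only [Pi.smul_apply, smul_eq_mul, this]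
  rw [Real.sqrt_mul (sq_nonneg c), Real.sqrt_sq_eq_abs]

lemma l2norm_eq_zero {n : ℕ} {v : Fin n → ℝ} (h : l2norm v = 0) : v = 0 := by
  have hs : ∑ i, (v i)^2 = 0 := by
    have := l2norm_sq v; rw [h] at this; simpa using this.symm
  funext i
  have := (Finset.sum_eq_zero_iff_of_nonneg (fun i _ => sq_nonneg (v i))).1 hs i (Finset.mem_univ i)
  exact pow_eq_zero_iff (by norm_num) |>.1 this

end Aux
section Sigma

variable {m n : ℕ}

lemma sigmaMin_bddBelow (M : Matrix (Fin m) (Fin n) ℝ) :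
    BddBelow {r : ℝ | ∃ x : Fin n → ℝ, l2norm x = 1 ∧ r = l2norm (M.mulVec x)} :=
  ⟨0, fun r ⟨x, _, hr⟩ => hr ▸ l2norm_nonneg _⟩

lemma sigmaMin_le (M : Matrix (Fin m) (Fin n) ℝ) {x : Fin n → ℝ} (hx : l2norm x = 1) :
    sigmaMin M ≤ l2norm (M.mulVec x) :=
  csInf_le (sigmaMin_bddBelow M) ⟨x, hx, rfl⟩

lemma sigmaMin_mulVec {M : Matrix (Fin m) (Fin n) ℝ} {α : ℝ} (hα : α ≤ sigmaMin M)
    (x : Fin n → ℝ) (hx : x ≠ 0) : α * l2norm x ≤ l2norm (M.mulVec x) := by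
  have hc : 0 < l2norm x := by
    rcases lt_or_eq_of_le (l2norm_nonneg x) with h | h
    · exact h
    · exact absurd (l2norm_eq_zero h.symm) hx
  set c := l2norm x with hcdef
  have hu : l2norm (c⁻¹ • x) = 1 := by
    rw [l2norm_smul, abs_of_pos (inv_pos.2 hc)]
    field_simp
    exact hcdef.symm
  have h2 : sigmaMin M ≤ l2norm (M.mulVec (c⁻¹ • x)) := sigmaMin_le M hu
  rw [Matrix.mulVec_smul, l2norm_smul, abs_of_pos (inv_pos.2 hc)] at h2
  have := le_trans hα h2
  calc α * c ≤ (c⁻¹ * l2norm (M.mulVec x)) * c := by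
        apply mul_le_mul_of_nonneg_right this hc.le
    _ = l2norm (M.mulVec x) := by field_simp
  
/-- Full column rank from a positive lower bound on the least singular value. -/
lemma pinvFC_mul_self {M : Matrix (Fin m) (Fin n) ℝ} {α : ℝ} (hα0 : 0 < α)
    (hα : α ≤ sigmaMin M) : pinvFC M * M = 1 := by
  have hdet : IsUnit (Mᵀ * M).det := by
    by_contra hd
    have hd0 : (Mᵀ * M).det = 0 := by
      rcases eq_or_ne ((Mᵀ * M).det) 0 with h | h
      · exact h
      · exact absurd (isUnit_iff_ne_zero.2 h) hd
    obtain ⟨v, hv0, hv⟩ := (Matrix.exists_mulVec_eq_zero_iff).2 hd0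
    have hMv : M.mulVec v = 0 := by
      have hdot : (M.mulVec v) ⬝ᵥ (M.mulVec v) = 0 := by
        have hvm : (M.mulVec v) ᵥ* M = (Mᵀ * M).mulVec v := by
          rw [← Matrix.mulVec_transpose, Matrix.mulVec_mulVec]
        rw [Matrix.dotProduct_mulVec, hvm, hv]
        simp
      have hsum : ∑ i, (M.mulVec v i)^2 = 0 := by
        rw [← hdot]; simp [dotProduct, sq]
      funext i
      have := (Finset.sum_eq_zero_iff_of_nonneg (fun i _ => sq_nonneg (M.mulVec v i))).1 hsum i
        (Finset.mem_univ i)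
      simpa using pow_eq_zero_iff (two_ne_zero) |>.1 this
    have := sigmaMin_mulVec hα v hv0
    rw [hMv] at this
    have hl2 : l2norm (0 : Fin m → ℝ) = 0 := by simp [l2norm]
    rw [hl2] at this
    have hv2 : 0 < l2norm v := by
      rcases lt_or_eq_of_le (l2norm_nonneg v) with h | h
      · exact h
      · exact absurd (l2norm_eq_zero h.symm) hv0
    nlinarith
  rw [pinvFC, Matrix.mul_assoc, Matrix.nonsing_inv_mul _ hdet]

/-- `M M†` is a contraction in `ℓ²`. -/
lemma proj_l2_le {M : Matrix (Fin m) (Fin n) ℝ} (hfc : pinvFC M * M = 1) (y : Fin m → ℝ) :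
    l2norm ((M * pinvFC M).mulVec y) ≤ l2norm y := by
  set G := M * pinvFC M with hG
  have hGG : G * G = G := by
    rw [hG, Matrix.mul_assoc, ← Matrix.mul_assoc (pinvFC M) M (pinvFC M), hfc, Matrix.one_mul]
  have hGT : Gᵀ = G := by
    simp only [hG, pinvFC, Matrix.transpose_mul, Matrix.transpose_transpose,
      Matrix.transpose_nonsing_inv, Matrix.mul_assoc]
  set z := G.mulVec y with hz
  have hzz : z ⬝ᵥ z = z ⬝ᵥ y := by
    calc z ⬝ᵥ z = z ⬝ᵥ (G.mulVec y) := rfl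
      _ = (z ᵥ* G) ⬝ᵥ y := Matrix.dotProduct_mulVec z G y
      _ = (Gᵀ.mulVec z) ⬝ᵥ y := by rw [Matrix.mulVec_transpose]
      _ = (G.mulVec z) ⬝ᵥ y := by rw [hGT]
      _ = ((G * G).mulVec y) ⬝ᵥ y := by rw [hz, Matrix.mulVec_mulVec]
      _ = z ⬝ᵥ y := by rw [hGG]
  have hsq : (l2norm z)^2 ≤ l2norm z * l2norm y := by
    have h1 : (l2norm z)^2 = z ⬝ᵥ z := by rw [l2norm_sq]; simp [dotProduct, sq]
    have h2 : z ⬝ᵥ y ≤ l2norm z * l2norm y := by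
      have hcs := Finset.sum_mul_sq_le_sq_mul_sq Finset.univ z y
      have h3 : z ⬝ᵥ y ≤ |z ⬝ᵥ y| := le_abs_self _
      have h4 : |z ⬝ᵥ y|^2 ≤ ((l2norm z) * (l2norm y))^2 := by
        rw [sq_abs, mul_pow, l2norm_sq, l2norm_sq]
        exact hcs
      have h5 : |z ⬝ᵥ y| ≤ l2norm z * l2norm y := by
        nlinarith [abs_nonneg (z ⬝ᵥ y), mul_nonneg (l2norm_nonneg z) (l2norm_nonneg y), h4]
      exact le_trans h3 h5
    rw [h1, hzz]; exact h2
  rcases eq_or_lt_of_le (l2norm_nonneg z) with h | h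
  · rw [← h]; exact l2norm_nonneg y
  · nlinarith

/-- The key `ℓ¹` bound for the pseudoinverse. -/
lemma pinv_l1_bound {M : Matrix (Fin m) (Fin n) ℝ} {α : ℝ} (hα0 : 0 < α)
    (hα : α ≤ sigmaMin M) (y : Fin m → ℝ) :
    l1norm ((pinvFC M).mulVec y) ≤ (Real.sqrt n / α) * l1norm y := by
  have hfc := pinvFC_mul_self hα0 hα
  set x := (pinvFC M).mulVec y with hx
  have h1 : α * l2norm x ≤ l2norm (M.mulVec x) := by
    rcases eq_or_ne x 0 with h | h
    · rw [h]; simp [l2norm]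
    · exact sigmaMin_mulVec hα x h
  have h2 : M.mulVec x = (M * pinvFC M).mulVec y := by rw [hx, Matrix.mulVec_mulVec]
  have h3 : l2norm (M.mulVec x) ≤ l2norm y := h2 ▸ proj_l2_le hfc y
  have h4 : l2norm x ≤ l2norm y / α := by
    rw [le_div_iff₀ hα0]; nlinarith
  calc l1norm x ≤ Real.sqrt n * l2norm x := l1norm_le_sqrt_mul_l2norm x
    _ ≤ Real.sqrt n * (l2norm y / α) := by
        apply mul_le_mul_of_nonneg_left h4 (Real.sqrt_nonneg _)
    _ ≤ Real.sqrt n * (l1norm y / α) := by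
        apply mul_le_mul_of_nonneg_left _ (Real.sqrt_nonneg _)
        exact (div_le_div_iff_of_pos_right hα0).2 (l2norm_le_l1norm y)
    _ = (Real.sqrt n / α) * l1norm y := by ring

end Sigma
section Contraction

lemma l1norm_mulVec_le {m n : ℕ} (M : Matrix (Fin m) (Fin n) ℝ)
    (hM : ∀ i j, 0 ≤ M i j) (hcol : ∀ j, ∑ i, M i j ≤ 1) (z : Fin n → ℝ) :
    l1norm (M.mulVec z) ≤ l1norm z := by
  calc l1norm (M.mulVec z) = ∑ i, |∑ j, M i j * z j| := rfl
    _ ≤ ∑ i, ∑ j, M i j * |z j| := by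
        apply Finset.sum_le_sum; intro i _
        refine (Finset.abs_sum_le_sum_abs _ _).trans ?_
        apply Finset.sum_le_sum; intro j _
        rw [abs_mul, abs_of_nonneg (hM i j)]
    _ = ∑ j, (∑ i, M i j) * |z j| := by
        rw [Finset.sum_comm]; congr 1; funext j; rw [Finset.sum_mul]
    _ ≤ ∑ j, |z j| := by
        apply Finset.sum_le_sum; intro j _
        have := mul_le_mul_of_nonneg_right (hcol j) (abs_nonneg (z j))
        simpa using this

lemma sum_l1norm_mulVec_le {ι : Type*} [Fintype ι] {m n : ℕ}
    (N : ι → Matrix (Fin m) (Fin n) ℝ) (hN : ∀ o i j, 0 ≤ N o i j)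
    (hcol : ∀ j, ∑ o, ∑ i, N o i j ≤ 1) (z : Fin n → ℝ) :
    ∑ o, l1norm ((N o).mulVec z) ≤ l1norm z := by
  calc ∑ o, l1norm ((N o).mulVec z) = ∑ o, ∑ i, |∑ j, N o i j * z j| := rfl
    _ ≤ ∑ o, ∑ i, ∑ j, N o i j * |z j| := by
        apply Finset.sum_le_sum; intro o _
        apply Finset.sum_le_sum; intro i _
        refine (Finset.abs_sum_le_sum_abs _ _).trans ?_
        apply Finset.sum_le_sum; intro j _
        rw [abs_mul, abs_of_nonneg (hN o i j)]
    _ = ∑ j, (∑ o, ∑ i, N o i j) * |z j| := by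
        have h1 : ∀ o : ι, (∑ i, ∑ j, N o i j * |z j|) = ∑ j, (∑ i, N o i j) * |z j| := by
          intro o
          rw [Finset.sum_comm]
          exact Finset.sum_congr rfl fun j _ => (Finset.sum_mul _ _ _).symm
        rw [Finset.sum_congr rfl fun o _ => h1 o, Finset.sum_comm]
        exact Finset.sum_congr rfl fun j _ => (Finset.sum_mul _ _ _).symm
    _ ≤ ∑ j, |z j| := by
        apply Finset.sum_le_sum; intro j _
        have := mul_le_mul_of_nonneg_right (hcol j) (abs_nonneg (z j))
        simpa using this

lemma l1norm_mulVec_mulVec_le {p q r : ℕ} (X : Matrix (Fin p) (Fin q) ℝ)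
    (Y : Matrix (Fin q) (Fin r) ℝ) (c : Fin r → ℝ) (hc : ∀ s, 0 ≤ c s) :
    l1norm (X.mulVec (Y.mulVec c)) ≤ ∑ s, l1norm (X.mulVec (fun i => Y i s)) * c s := by
  have key : ∀ i, X.mulVec (Y.mulVec c) i = ∑ s, (X.mulVec (fun j => Y j s)) i * c s := by
    intro i
    simp only [Matrix.mulVec, dotProduct, Finset.mul_sum, Finset.sum_mul]
    rw [Finset.sum_comm]
    exact Finset.sum_congr rfl fun s _ => Finset.sum_congr rfl fun j _ => by ring
  calc l1norm (X.mulVec (Y.mulVec c)) = ∑ i, |∑ s, (X.mulVec (fun j => Y j s)) i * c s| := by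
        unfold l1norm; congr 1; funext i; rw [key]
    _ ≤ ∑ i, ∑ s, |(X.mulVec (fun j => Y j s)) i| * c s := by
        apply Finset.sum_le_sum; intro i _
        refine (Finset.abs_sum_le_sum_abs _ _).trans ?_
        apply Finset.sum_le_sum; intro s _
        rw [abs_mul, abs_of_nonneg (hc s)]
    _ = ∑ s, l1norm (X.mulVec (fun j => Y j s)) * c s := by
        rw [Finset.sum_comm]
        congr 1; funext s; rw [l1norm, Finset.sum_mul]

end Contraction

section Adm

variable {A O : ℕ}

lemma mem_gammaF {π : Policy A O} {h : ℕ} {τ : POMDPParams.Traj A O h} :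
    τ ∈ GammaF π h ↔ IsAdm π τ := by simp [GammaF]

lemma isAdm_init {π : Policy A O} {n : ℕ} {τ : POMDPParams.Traj A O (n+1)}
    (h : IsAdm π τ) : IsAdm π (fun i : Fin n => τ i.castSucc) :=
  fun j => h j.castSucc

lemma isAdm_last {π : Policy A O} {n : ℕ} {τ : POMDPParams.Traj A O (n+1)}
    (h : IsAdm π τ) :
    (τ (Fin.last n)).1 = π n (fun i : Fin n => τ i.castSucc) (τ (Fin.last n)).2 :=
  h (Fin.last n)

lemma isAdm_snoc {π : Policy A O} {n : ℕ} {τ : POMDPParams.Traj A O n}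
    (hτ : IsAdm π τ) (o : Fin O) : IsAdm π (Fin.snoc τ (π n τ o, o)) := by
  intro j
  rcases Fin.eq_castSucc_or_eq_last j with ⟨k, rfl⟩ | rfl
  · have hcast : ∀ i : Fin (k.castSucc).val,
        (Fin.castLE (k.castSucc).isLt.le i : Fin (n+1))
          = (Fin.castLE k.isLt.le i).castSucc := fun i => rfl
    simp only [hcast, Fin.snoc_castSucc]
    exact hτ k
  · have hcast2 : ∀ i : Fin (Fin.last n).val,
        (Fin.castLE (Fin.last n).isLt.le i : Fin (n+1)) = Fin.castSucc i := fun i => rfl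
    simp only [hcast2, Fin.snoc_last, Fin.snoc_castSucc]
    rfl

lemma sum_gammaF_succ (π : Policy A O) (n : ℕ) (f : POMDPParams.Traj A O (n+1) → ℝ) :
    ∑ τ ∈ GammaF π (n+1), f τ
      = ∑ τ ∈ GammaF π n, ∑ o : Fin O, f (Fin.snoc τ (π n τ o, o)) := by
  have hp := Finset.sum_product (GammaF π n) (Finset.univ : Finset (Fin O))
    (fun p => f (Fin.snoc p.1 (π n p.1 p.2, p.2)))
  rw [← hp]
  refine Finset.sum_bij'
    (fun τ _ => ((fun i : Fin n => τ i.castSucc), (τ (Fin.last n)).2))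
    (fun p _ => Fin.snoc p.1 (π n p.1 p.2, p.2)) ?_ ?_ ?_ ?_ ?_
  · intro τ hτ
    rw [Finset.mem_product]
    exact ⟨mem_gammaF.2 (isAdm_init (mem_gammaF.1 hτ)), Finset.mem_univ _⟩
  · intro p hp2
    rw [Finset.mem_product] at hp2
    exact mem_gammaF.2 (isAdm_snoc (mem_gammaF.1 hp2.1) p.2)
  · intro τ hτ
    have h1 := isAdm_last (mem_gammaF.1 hτ)
    have : ((π n (fun i : Fin n => τ i.castSucc) (τ (Fin.last n)).2, (τ (Fin.last n)).2))
        = τ (Fin.last n) := Prod.ext h1.symm rfl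
    simp only [this]
    exact Fin.snoc_init_self τ
  · intro p hp2
    refine Prod.ext ?_ ?_
    · funext i
      simp only [Fin.snoc_castSucc]
    · simp only [Fin.snoc_last]
  · intro τ hτ
    have h1 := isAdm_last (mem_gammaF.1 hτ)
    have : ((π n (fun i : Fin n => τ i.castSucc) (τ (Fin.last n)).2, (τ (Fin.last n)).2))
        = τ (Fin.last n) := Prod.ext h1.symm rfl
    simp only [this]
    have h2 : (Fin.snoc (fun i : Fin n => τ i.castSucc) (τ (Fin.last n))
        : POMDPParams.Traj A O (n+1)) = τ := Fin.snoc_init_self τ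
    rw [h2]

end Adm
lemma l1norm_neg {n : ℕ} (v : Fin n → ℝ) : l1norm (-v) = l1norm v := by
  unfold l1norm; congr 1; funext i; simp

lemma l1norm_sub_mulVec_comm {m n : ℕ} (X Y : Matrix (Fin m) (Fin n) ℝ) (v : Fin n → ℝ) :
    l1norm ((X - Y).mulVec v) = l1norm ((Y - X).mulVec v) := by
  rw [show X - Y = -(Y - X) from (neg_sub _ _).symm, Matrix.neg_mulVec, l1norm_neg]

lemma diag_mulVec {n : ℕ} (d : Fin n → ℝ) (v : Fin n → ℝ) :
    (Matrix.diagonal d).mulVec v = fun i => d i * v i := by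
  funext i; simp [Matrix.mulVec, dotProduct, Matrix.diagonal, Finset.sum_ite_eq]

section POMDPAux

variable {S A O : ℕ}

open POMDPParams

lemma stateBelief_nonneg (θ : POMDPParams S A O) :
    ∀ (n : ℕ) (τ : Traj A O n) (s : Fin S), 0 ≤ θ.stateBelief n τ s
  | 0, _, s => θ.mu1_nonneg s
  | (n+1), τ, s => by
    show 0 ≤ (θ.T (n+1) (τ (Fin.last n)).1).mulVec _ s
    simp only [Matrix.mulVec, dotProduct]
    apply Finset.sum_nonneg
    intro s' _
    exact mul_nonneg (θ.T_nonneg _ _ _ _)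
      (mul_nonneg (θ.Ob_nonneg _ _ _) (stateBelief_nonneg θ n _ s'))

lemma belief_eq_ob (θ : POMDPParams S A O) (hfc : ∀ j : ℕ, pinvFC (θ.Ob j) * θ.Ob j = 1) :
    ∀ (n : ℕ) (τ : Traj A O n), θ.belief n τ = (θ.Ob (n+1)).mulVec (θ.stateBelief n τ)
  | 0, _ => rfl
  | (n+1), τ => by
    show (θ.Bop (n+1) (τ (Fin.last n)).1 (τ (Fin.last n)).2).mulVec
        (θ.belief n (fun i : Fin n => τ i.castSucc)) = _
    rw [belief_eq_ob θ hfc n]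
    have hmat : θ.Bop (n+1) (τ (Fin.last n)).1 (τ (Fin.last n)).2 * θ.Ob (n+1)
        = (θ.Ob (n+2) * θ.T (n+1) (τ (Fin.last n)).1)
            * Matrix.diagonal (fun s => θ.Ob (n+1) (τ (Fin.last n)).2 s) := by
      rw [POMDPParams.Bop, Matrix.mul_assoc _ (pinvFC (θ.Ob (n+1))) (θ.Ob (n+1)), hfc,
        Matrix.mul_one]
    rw [Matrix.mulVec_mulVec, hmat, ← Matrix.mulVec_mulVec, ← Matrix.mulVec_mulVec,
      diag_mulVec]
    rfl

/-- The observable operator applied after an `𝕆`-vector, in latent form. -/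
lemma bop_ob_mulVec (θ : POMDPParams S A O) (hfc : ∀ j : ℕ, pinvFC (θ.Ob j) * θ.Ob j = 1)
    (n : ℕ) (a : Fin A) (o : Fin O) (v : Fin O → ℝ) :
    (θ.Bop (n+1) a o).mulVec v
      = ((θ.Ob (n+2) * θ.T (n+1) a) * Matrix.diagonal (fun s => θ.Ob (n+1) o s)).mulVec
          ((pinvFC (θ.Ob (n+1))).mulVec v) := by
  rw [Matrix.mulVec_mulVec, POMDPParams.Bop]

lemma pinv_bop (θ : POMDPParams S A O) (hfc : ∀ j : ℕ, pinvFC (θ.Ob j) * θ.Ob j = 1)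
    (n : ℕ) (a : Fin A) (o : Fin O) :
    pinvFC (θ.Ob (n+2)) * θ.Bop (n+1) a o
      = (θ.T (n+1) a * Matrix.diagonal (fun s => θ.Ob (n+1) o s)) * pinvFC (θ.Ob (n+1)) := by
  rw [POMDPParams.Bop]
  simp only [← Matrix.mul_assoc]
  rw [hfc (n+2), Matrix.one_mul]

/-- Summed stochastic contraction, with leading observation matrix. -/
lemma con1 (θh : POMDPParams S A O) (n : ℕ) (aof : Fin O → Fin A) (D : Fin S → ℝ) :
    ∑ o : Fin O, l1norm (((θh.Ob (n+2) * θh.T (n+1) (aof o))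
        * Matrix.diagonal (fun s => θh.Ob (n+1) o s)).mulVec D) ≤ l1norm D := by
  apply sum_l1norm_mulVec_le
  · intro o i s
    rw [Matrix.mul_diagonal]
    apply mul_nonneg _ (θh.Ob_nonneg _ _ _)
    rw [Matrix.mul_apply]
    exact Finset.sum_nonneg fun s' _ => mul_nonneg (θh.Ob_nonneg _ _ _) (θh.T_nonneg _ _ _ _)
  · intro s
    have : ∀ o : Fin O, ∑ i, ((θh.Ob (n+2) * θh.T (n+1) (aof o))
        * Matrix.diagonal (fun s' => θh.Ob (n+1) o s')) i s = θh.Ob (n+1) o s := by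
      intro o
      have h1 : ∀ i, ((θh.Ob (n+2) * θh.T (n+1) (aof o))
          * Matrix.diagonal (fun s' => θh.Ob (n+1) o s')) i s
            = (θh.Ob (n+2) * θh.T (n+1) (aof o)) i s * θh.Ob (n+1) o s := fun i =>
        Matrix.mul_diagonal _ _ _ _
      rw [Finset.sum_congr rfl fun i _ => h1 i, ← Finset.sum_mul]
      have h2 : ∑ i, (θh.Ob (n+2) * θh.T (n+1) (aof o)) i s = 1 := by
        simp only [Matrix.mul_apply]
        rw [Finset.sum_comm]
        calc ∑ s', ∑ i, θh.Ob (n+2) i s' * θh.T (n+1) (aof o) s' s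
            = ∑ s', (∑ i, θh.Ob (n+2) i s') * θh.T (n+1) (aof o) s' s := by
              exact Finset.sum_congr rfl fun s' _ => (Finset.sum_mul _ _ _).symm
          _ = ∑ s', θh.T (n+1) (aof o) s' s := by
              exact Finset.sum_congr rfl fun s' _ => by rw [θh.Ob_colsum]; ring
          _ = 1 := θh.T_colsum _ _ _
      rw [h2, one_mul]
    rw [Finset.sum_congr rfl fun o _ => this o, θh.Ob_colsum]

/-- Summed stochastic contraction, latent form. -/
lemma con2 (θh : POMDPParams S A O) (n : ℕ) (aof : Fin O → Fin A) (D : Fin S → ℝ) :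
    ∑ o : Fin O, l1norm ((θh.T (n+1) (aof o)
        * Matrix.diagonal (fun s => θh.Ob (n+1) o s)).mulVec D) ≤ l1norm D := by
  apply sum_l1norm_mulVec_le
  · intro o i s
    rw [Matrix.mul_diagonal]
    exact mul_nonneg (θh.T_nonneg _ _ _ _) (θh.Ob_nonneg _ _ _)
  · intro s
    have : ∀ o : Fin O, ∑ i, (θh.T (n+1) (aof o)
        * Matrix.diagonal (fun s' => θh.Ob (n+1) o s')) i s = θh.Ob (n+1) o s := by
      intro o
      have h1 : ∀ i, (θh.T (n+1) (aof o) * Matrix.diagonal (fun s' => θh.Ob (n+1) o s')) i s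
          = θh.T (n+1) (aof o) i s * θh.Ob (n+1) o s := fun i => Matrix.mul_diagonal _ _ _ _
      rw [Finset.sum_congr rfl fun i _ => h1 i, ← Finset.sum_mul, θh.T_colsum, one_mul]
    rw [Finset.sum_congr rfl fun o _ => this o, θh.Ob_colsum]

lemma one_le_kappa (θh : POMDPParams S A O) {α : ℝ} (hα : 0 < α)
    (hσ : α ≤ sigmaMin (θh.Ob 1)) (hS : 0 < S) : 1 ≤ Real.sqrt S / α := by
  have s0 : Fin S := ⟨0, hS⟩
  have hunit : l2norm (Pi.single s0 1 : Fin S → ℝ) = 1 := by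
    rw [l2norm]
    have : ∑ i, ((Pi.single s0 1 : Fin S → ℝ) i)^2 = 1 := by
      rw [Finset.sum_eq_single s0]
      · simp
      · intro b _ hb; simp [Pi.single_eq_of_ne hb]
      · intro hb; exact absurd (Finset.mem_univ s0) hb
    rw [this, Real.sqrt_one]
  have h1 : sigmaMin (θh.Ob 1) ≤ l2norm ((θh.Ob 1).mulVec (Pi.single s0 1)) :=
    sigmaMin_le _ hunit
  have hcol : (θh.Ob 1).mulVec (Pi.single s0 1) = fun i => θh.Ob 1 i s0 := by
    rw [Matrix.mulVec_single]; funext i; simp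
  have h2 : l2norm (fun i => θh.Ob 1 i s0) ≤ 1 := by
    have hsum : ∑ i, (θh.Ob 1 i s0)^2 ≤ 1 := by
      calc ∑ i, (θh.Ob 1 i s0)^2 ≤ (∑ i, θh.Ob 1 i s0)^2 :=
            Finset.sum_sq_le_sq_sum_of_nonneg (fun i _ => θh.Ob_nonneg 1 i s0)
        _ = 1 := by rw [θh.Ob_colsum]; norm_num
    rw [l2norm]
    calc Real.sqrt (∑ i, (θh.Ob 1 i s0)^2) ≤ Real.sqrt 1 := Real.sqrt_le_sqrt hsum
      _ = 1 := Real.sqrt_one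
  have hα1 : α ≤ 1 := by
    rw [hcol] at h1
    exact le_trans hσ (le_trans h1 h2)
  have hs : (1:ℝ) ≤ Real.sqrt S := by
    rw [show (1:ℝ) = Real.sqrt 1 from Real.sqrt_one.symm]
    apply Real.sqrt_le_sqrt
    exact_mod_cast hS
  rw [le_div_iff₀ hα]
  linarith

end POMDPAux
section Main

variable {S A O : ℕ}

/-- Latent (pseudo-inverted) belief error. -/
def Dvec (θ θh : POMDPParams S A O) (n : ℕ) (τ : POMDPParams.Traj A O n) : Fin S → ℝ :=
  (pinvFC (θh.Ob (n+1))).mulVec (θ.belief n τ - θh.belief n τ)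

/-- Total latent belief error over admissible trajectories. -/
def Qsum (θ θh : POMDPParams S A O) (π : Policy A O) (n : ℕ) : ℝ :=
  ∑ τ ∈ GammaF π n, l1norm (Dvec θ θh n τ)

/-- Total one-step operator error applied to beliefs. -/
def Wsum (θ θh : POMDPParams S A O) (π : Policy A O) (n : ℕ) : ℝ :=
  ∑ τ ∈ GammaF π n, ∑ o : Fin O,
    l1norm ((θh.Bop (n+1) (π n τ o) o - θ.Bop (n+1) (π n τ o) o).mulVec (θ.belief n τ))

lemma Wsum_nonneg (θ θh : POMDPParams S A O) (π : Policy A O) (n : ℕ) :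
    0 ≤ Wsum θ θh π n :=
  Finset.sum_nonneg fun τ _ => Finset.sum_nonneg fun o _ => l1norm_nonneg _

lemma belief_snoc (θ : POMDPParams S A O) (n : ℕ) (τ : POMDPParams.Traj A O n)
    (p : Fin A × Fin O) :
    θ.belief (n+1) (Fin.snoc τ p) = (θ.Bop (n+1) p.1 p.2).mulVec (θ.belief n τ) := by
  simp only [POMDPParams.belief, Fin.snoc_last, Fin.snoc_castSucc]

lemma stateBelief_snoc (θ : POMDPParams S A O) (n : ℕ) (τ : POMDPParams.Traj A O n)
    (p : Fin A × Fin O) :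
    θ.stateBelief (n+1) (Fin.snoc τ p)
      = (θ.T (n+1) p.1).mulVec (fun s => θ.Ob (n+1) p.2 s * θ.stateBelief n τ s) := by
  simp only [POMDPParams.stateBelief, Fin.snoc_last, Fin.snoc_castSucc]

lemma delta_decomp (θ θh : POMDPParams S A O) (n : ℕ) (τ : POMDPParams.Traj A O n)
    (a : Fin A) (o : Fin O) :
    θ.belief (n+1) (Fin.snoc τ (a,o)) - θh.belief (n+1) (Fin.snoc τ (a,o))
      = (θh.Bop (n+1) a o).mulVec (θ.belief n τ - θh.belief n τ)
        + (θ.Bop (n+1) a o - θh.Bop (n+1) a o).mulVec (θ.belief n τ) := by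
  rw [belief_snoc, belief_snoc, Matrix.mulVec_sub, Matrix.sub_mulVec]
  abel

lemma sum_delta_succ_le (θ θh : POMDPParams S A O) (π : Policy A O) (n : ℕ)
    (hfc' : ∀ j : ℕ, pinvFC (θh.Ob j) * θh.Ob j = 1) :
    ∑ τ ∈ GammaF π (n+1), l1norm (θ.belief (n+1) τ - θh.belief (n+1) τ)
      ≤ Qsum θ θh π n + Wsum θ θh π n := by
  rw [sum_gammaF_succ, Qsum, Wsum, ← Finset.sum_add_distrib]
  apply Finset.sum_le_sum
  intro τ _
  calc ∑ o : Fin O, l1norm (θ.belief (n+1) (Fin.snoc τ (π n τ o, o))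
          - θh.belief (n+1) (Fin.snoc τ (π n τ o, o)))
      ≤ ∑ o : Fin O, (l1norm (((θh.Ob (n+2) * θh.T (n+1) (π n τ o))
            * Matrix.diagonal (fun s => θh.Ob (n+1) o s)).mulVec (Dvec θ θh n τ))
          + l1norm ((θh.Bop (n+1) (π n τ o) o - θ.Bop (n+1) (π n τ o) o).mulVec
              (θ.belief n τ))) := by
        apply Finset.sum_le_sum
        intro o _
        rw [delta_decomp]
        refine (l1norm_add_le _ _).trans ?_
        apply add_le_add
        · rw [bop_ob_mulVec θh hfc']
          exact le_of_eq rfl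
        · rw [l1norm_sub_mulVec_comm]
      _ = (∑ o : Fin O, l1norm (((θh.Ob (n+2) * θh.T (n+1) (π n τ o))
            * Matrix.diagonal (fun s => θh.Ob (n+1) o s)).mulVec (Dvec θ θh n τ)))
          + ∑ o : Fin O, l1norm ((θh.Bop (n+1) (π n τ o) o - θ.Bop (n+1) (π n τ o) o).mulVec
              (θ.belief n τ)) := Finset.sum_add_distrib
      _ ≤ l1norm (Dvec θ θh n τ) + ∑ o : Fin O,
            l1norm ((θh.Bop (n+1) (π n τ o) o - θ.Bop (n+1) (π n τ o) o).mulVec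
              (θ.belief n τ)) :=
        add_le_add (con1 θh n (fun o => π n τ o) (Dvec θ θh n τ)) le_rfl

lemma Qsum_succ_le (θ θh : POMDPParams S A O) (π : Policy A O) (n : ℕ) {α : ℝ}
    (hα : 0 < α) (hσ : ∀ j : ℕ, α ≤ sigmaMin (θh.Ob j))
    (hfc' : ∀ j : ℕ, pinvFC (θh.Ob j) * θh.Ob j = 1) :
    Qsum θ θh π (n+1) ≤ Qsum θ θh π n + (Real.sqrt S / α) * Wsum θ θh π n := by
  rw [Qsum, sum_gammaF_succ, Qsum, Wsum, Finset.mul_sum, ← Finset.sum_add_distrib]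
  apply Finset.sum_le_sum
  intro τ _
  have hD : ∀ o : Fin O, Dvec θ θh (n+1) (Fin.snoc τ (π n τ o, o))
      = (θh.T (n+1) (π n τ o) * Matrix.diagonal (fun s => θh.Ob (n+1) o s)).mulVec
          (Dvec θ θh n τ)
        + (pinvFC (θh.Ob (n+2))).mulVec
            ((θ.Bop (n+1) (π n τ o) o - θh.Bop (n+1) (π n τ o) o).mulVec (θ.belief n τ)) := by
    intro o
    rw [Dvec, delta_decomp, Matrix.mulVec_add]
    congr 1
    rw [Matrix.mulVec_mulVec, pinv_bop θh hfc', ← Matrix.mulVec_mulVec]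
    rfl
  calc ∑ o : Fin O, l1norm (Dvec θ θh (n+1) (Fin.snoc τ (π n τ o, o)))
      ≤ ∑ o : Fin O, (l1norm ((θh.T (n+1) (π n τ o)
            * Matrix.diagonal (fun s => θh.Ob (n+1) o s)).mulVec (Dvec θ θh n τ))
          + (Real.sqrt S / α) * l1norm ((θh.Bop (n+1) (π n τ o) o
              - θ.Bop (n+1) (π n τ o) o).mulVec (θ.belief n τ))) := by
        apply Finset.sum_le_sum
        intro o _
        rw [hD o]
        refine (l1norm_add_le _ _).trans ?_
        apply add_le_add le_rfl
        refine (pinv_l1_bound hα (hσ (n+2)) _).trans ?_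
        rw [l1norm_sub_mulVec_comm]
      _ = (∑ o : Fin O, l1norm ((θh.T (n+1) (π n τ o)
            * Matrix.diagonal (fun s => θh.Ob (n+1) o s)).mulVec (Dvec θ θh n τ)))
          + ∑ o : Fin O, (Real.sqrt S / α) * l1norm ((θh.Bop (n+1) (π n τ o) o
              - θ.Bop (n+1) (π n τ o) o).mulVec (θ.belief n τ)) := Finset.sum_add_distrib
      _ ≤ l1norm (Dvec θ θh n τ) + (Real.sqrt S / α) * ∑ o : Fin O,
            l1norm ((θh.Bop (n+1) (π n τ o) o - θ.Bop (n+1) (π n τ o) o).mulVec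
              (θ.belief n τ)) := by
        apply add_le_add (con2 θh n (fun o => π n τ o) (Dvec θ θh n τ))
        rw [Finset.mul_sum]

lemma gammaF_zero (π : Policy A O) : GammaF π 0 = Finset.univ := by
  rw [GammaF, Finset.filter_true_of_mem]
  intro τ _ j
  exact j.elim0

lemma Qsum_zero_le (θ θh : POMDPParams S A O) (π : Policy A O) {α : ℝ}
    (hα : 0 < α) (hσ : ∀ j : ℕ, α ≤ sigmaMin (θh.Ob j)) :
    Qsum θ θh π 0 ≤ (Real.sqrt S / α) * l1norm (θ.bvec0 - θh.bvec0) := by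
  rw [Qsum, gammaF_zero, Fintype.sum_unique]
  exact pinv_l1_bound hα (hσ 1) _

lemma Wsum_zero_le (θ θh : POMDPParams S A O) (π : Policy A O) :
    Wsum θ θh π 0 ≤ ∑ a : Fin A, ∑ o : Fin O,
      l1norm ((θh.Bop 1 a o - θ.Bop 1 a o).mulVec θ.bvec0) := by
  rw [Wsum, gammaF_zero, Fintype.sum_unique]
  rw [Finset.sum_comm]
  apply Finset.sum_le_sum
  intro o _
  exact Finset.single_le_sum
    (f := fun a => l1norm ((θh.Bop 1 a o - θ.Bop 1 a o).mulVec θ.bvec0))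
    (fun a _ => l1norm_nonneg _) (Finset.mem_univ _)

end Main
section Main2

variable {S A O : ℕ}

/-- Column-projected operator error. -/
def Kterm (θ θh : POMDPParams S A O) (m : ℕ) (a a' : Fin A) (o : Fin O) (s : Fin S) : ℝ :=
  l1norm ((θh.Bop (m+2) a o - θ.Bop (m+2) a o).mulVec
    (fun i => (θ.Ob (m+2) * θ.T (m+1) a') i s))

lemma Kterm_nonneg (θ θh : POMDPParams S A O) (m : ℕ) (a a' : Fin A) (o : Fin O) (s : Fin S) :
    0 ≤ Kterm θ θh m a a' o s := l1norm_nonneg _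

/-- Joint observation–state weight. -/
def cterm (θ : POMDPParams S A O) (m : ℕ) (τ : POMDPParams.Traj A O m) (o' : Fin O)
    (s : Fin S) : ℝ := θ.Ob (m+1) o' s * θ.stateBelief m τ s

lemma cterm_nonneg (θ : POMDPParams S A O) (m : ℕ) (τ : POMDPParams.Traj A O m) (o' : Fin O)
    (s : Fin S) : 0 ≤ cterm θ m τ o' s :=
  mul_nonneg (θ.Ob_nonneg _ _ _) (stateBelief_nonneg θ m τ s)

lemma visit_eq (θ : POMDPParams S A O) (π : Policy A O) (m : ℕ) (s : Fin S) :
    ∑ τ ∈ GammaF π m, ∑ o' : Fin O, cterm θ m τ o' s = visitProb θ π (m+1) s := by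
  rw [visitProb]
  refine Finset.sum_congr rfl fun τ _ => ?_
  simp only [cterm]
  rw [← Finset.sum_mul, θ.Ob_colsum, one_mul]
  rfl

lemma reorder4 (g : Fin A → Fin A → Fin O → Fin S → ℝ) :
    ∑ o : Fin O, ∑ s : Fin S, ∑ a : Fin A, ∑ a' : Fin A, g a a' o s
      = ∑ a : Fin A, ∑ a' : Fin A, ∑ o : Fin O, ∑ s : Fin S, g a a' o s :=
  calc ∑ o : Fin O, ∑ s : Fin S, ∑ a : Fin A, ∑ a' : Fin A, g a a' o s
      = ∑ o : Fin O, ∑ a : Fin A, ∑ s : Fin S, ∑ a' : Fin A, g a a' o s :=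
        Finset.sum_congr rfl fun _ _ => Finset.sum_comm
    _ = ∑ a : Fin A, ∑ o : Fin O, ∑ s : Fin S, ∑ a' : Fin A, g a a' o s := Finset.sum_comm
    _ = ∑ a : Fin A, ∑ o : Fin O, ∑ a' : Fin A, ∑ s : Fin S, g a a' o s :=
        Finset.sum_congr rfl fun _ _ => Finset.sum_congr rfl fun _ _ => Finset.sum_comm
    _ = ∑ a : Fin A, ∑ a' : Fin A, ∑ o : Fin O, ∑ s : Fin S, g a a' o s :=
        Finset.sum_congr rfl fun _ _ => Finset.sum_comm

lemma Wsum_succ_le (θ θh : POMDPParams S A O) (π : Policy A O) (m : ℕ)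
    (hfc : ∀ j : ℕ, pinvFC (θ.Ob j) * θ.Ob j = 1) :
    Wsum θ θh π (m+1) ≤ ∑ a : Fin A, ∑ a' : Fin A, ∑ o : Fin O, ∑ s : Fin S,
      Kterm θ θh m a a' o s * visitProb θ π (m+1) s := by
  rw [Wsum, sum_gammaF_succ]
  have step1 : ∀ τ ∈ GammaF π m, ∀ o' : Fin O,
      (∑ o : Fin O, l1norm ((θh.Bop (m+1+1) (π (m+1) (Fin.snoc τ (π m τ o', o')) o) o
          - θ.Bop (m+1+1) (π (m+1) (Fin.snoc τ (π m τ o', o')) o) o).mulVec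
            (θ.belief (m+1) (Fin.snoc τ (π m τ o', o')))))
        ≤ ∑ o : Fin O, ∑ s : Fin S, ∑ a : Fin A, ∑ a' : Fin A,
            Kterm θ θh m a a' o s * cterm θ m τ o' s := by
    intro τ _ o'
    apply Finset.sum_le_sum
    intro o _
    have hb : θ.belief (m+1) (Fin.snoc τ (π m τ o', o'))
        = (θ.Ob (m+2) * θ.T (m+1) (π m τ o')).mulVec (fun s => cterm θ m τ o' s) := by
      rw [belief_eq_ob θ hfc, stateBelief_snoc, Matrix.mulVec_mulVec]
      rfl
    rw [hb]
    refine (l1norm_mulVec_mulVec_le _ _ _ (fun s => cterm_nonneg θ m τ o' s)).trans ?_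
    apply Finset.sum_le_sum
    intro s _
    calc l1norm ((θh.Bop (m+1+1) (π (m+1) (Fin.snoc τ (π m τ o', o')) o) o
            - θ.Bop (m+1+1) (π (m+1) (Fin.snoc τ (π m τ o', o')) o) o).mulVec
            (fun i => (θ.Ob (m+2) * θ.T (m+1) (π m τ o')) i s)) * cterm θ m τ o' s
        = Kterm θ θh m (π (m+1) (Fin.snoc τ (π m τ o', o')) o) (π m τ o') o s
            * cterm θ m τ o' s := rfl
      _ ≤ ∑ a' : Fin A, Kterm θ θh m (π (m+1) (Fin.snoc τ (π m τ o', o')) o) a' o s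
            * cterm θ m τ o' s :=
          Finset.single_le_sum
            (fun a' _ => mul_nonneg (Kterm_nonneg θ θh m _ a' o s) (cterm_nonneg θ m τ o' s))
            (Finset.mem_univ _)
      _ ≤ ∑ a : Fin A, ∑ a' : Fin A, Kterm θ θh m a a' o s * cterm θ m τ o' s :=
          Finset.single_le_sum
            (f := fun a => ∑ a' : Fin A, Kterm θ θh m a a' o s * cterm θ m τ o' s)
            (fun a _ => Finset.sum_nonneg fun a' _ =>
              mul_nonneg (Kterm_nonneg θ θh m a a' o s) (cterm_nonneg θ m τ o' s))
            (Finset.mem_univ _)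
  calc ∑ τ ∈ GammaF π m, ∑ o' : Fin O,
        (∑ o : Fin O, l1norm ((θh.Bop (m+1+1) (π (m+1) (Fin.snoc τ (π m τ o', o')) o) o
          - θ.Bop (m+1+1) (π (m+1) (Fin.snoc τ (π m τ o', o')) o) o).mulVec
            (θ.belief (m+1) (Fin.snoc τ (π m τ o', o')))))
      ≤ ∑ τ ∈ GammaF π m, ∑ o' : Fin O, ∑ o : Fin O, ∑ s : Fin S, ∑ a : Fin A, ∑ a' : Fin A,
          Kterm θ θh m a a' o s * cterm θ m τ o' s :=
        Finset.sum_le_sum fun τ hτ => Finset.sum_le_sum fun o' _ => step1 τ hτ o'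
    _ = ∑ τ ∈ GammaF π m, ∑ o' : Fin O, ∑ q : Fin A × Fin A × Fin O × Fin S,
          Kterm θ θh m q.1 q.2.1 q.2.2.1 q.2.2.2 * cterm θ m τ o' q.2.2.2 := by
        refine Finset.sum_congr rfl fun τ _ => Finset.sum_congr rfl fun o' _ => ?_
        rw [reorder4]
        simp only [Fintype.sum_prod_type]
    _ = ∑ q : Fin A × Fin A × Fin O × Fin S, ∑ τ ∈ GammaF π m, ∑ o' : Fin O,
          Kterm θ θh m q.1 q.2.1 q.2.2.1 q.2.2.2 * cterm θ m τ o' q.2.2.2 :=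
        calc _ = ∑ τ ∈ GammaF π m, ∑ q : Fin A × Fin A × Fin O × Fin S, ∑ o' : Fin O,
              Kterm θ θh m q.1 q.2.1 q.2.2.1 q.2.2.2 * cterm θ m τ o' q.2.2.2 :=
            Finset.sum_congr rfl fun τ _ => Finset.sum_comm
          _ = _ := Finset.sum_comm
    _ = ∑ q : Fin A × Fin A × Fin O × Fin S,
          Kterm θ θh m q.1 q.2.1 q.2.2.1 q.2.2.2 * visitProb θ π (m+1) q.2.2.2 := by
        refine Finset.sum_congr rfl fun q _ => ?_
        simp only [← Finset.mul_sum]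
        rw [visit_eq]
    _ = ∑ a : Fin A, ∑ a' : Fin A, ∑ o : Fin O, ∑ s : Fin S,
          Kterm θ θh m a a' o s * visitProb θ π (m+1) s := by
        simp only [Fintype.sum_prod_type]

end Main2
end
/-- Lemma `subopt-bound`: the total belief-state error is
bounded by the error in `b₀`, the error of the first-step operators on `b₀`,
and the reweighted column-projected operator errors. -/
theorem belief_error_le_reweighted_operator_error {S A O : ℕ} (hSO : S ≤ O)
    (α : ℝ) (hα : 0 < α) (θ θh : POMDPParams S A O)
    (hfc : ∀ j : ℕ, pinvFC (θ.Ob j) * θ.Ob j = 1)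
    (hσ : ∀ j : ℕ, α ≤ sigmaMin (θh.Ob j))
    (π : Policy A O) (h : ℕ) (hh : 1 ≤ h) :
    ∑ τ ∈ GammaF π h, l1norm (θ.belief h τ - θh.belief h τ)
      ≤ (Real.sqrt S / α) * l1norm (θ.bvec0 - θh.bvec0)
        + (Real.sqrt S / α) *
            ∑ a : Fin A, ∑ o : Fin O,
              l1norm ((θh.Bop 1 a o - θ.Bop 1 a o).mulVec θ.bvec0)
        + (Real.sqrt S / α) *
            ∑ j ∈ Finset.Icc 2 h, ∑ a : Fin A, ∑ a' : Fin A, ∑ o : Fin O, ∑ s : Fin S,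
              l1norm ((θh.Bop j a o - θ.Bop j a o).mulVec
                  (fun i => (θ.Ob j * θ.T (j - 1) a') i s)) *
                visitProb θ π (j - 1) s := by
  have hS : 0 < S := by
    rcases Nat.eq_zero_or_pos S with h0 | h1
    · exfalso
      have hmu := θ.mu1_sum
      subst h0
      simpa using hmu
    · exact h1
  have hfc' : ∀ j : ℕ, pinvFC (θh.Ob j) * θh.Ob j = 1 := fun j => pinvFC_mul_self hα (hσ j)
  have hκ1 : 1 ≤ Real.sqrt S / α := one_le_kappa θh hα (hσ 1) hS
  have hκ0 : 0 ≤ Real.sqrt S / α := le_trans zero_le_one hκ1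
  obtain ⟨n, rfl⟩ : ∃ n, h = n + 1 := ⟨h - 1, by omega⟩
  have T2 : ∀ k : ℕ, Qsum θ θh π k ≤ Qsum θ θh π 0
      + (Real.sqrt S / α) * ∑ i ∈ Finset.range k, Wsum θ θh π i := by
    intro k
    induction k with
    | zero => simp
    | succ k ih =>
      calc Qsum θ θh π (k+1)
          ≤ Qsum θ θh π k + (Real.sqrt S / α) * Wsum θ θh π k :=
            Qsum_succ_le θ θh π k hα hσ hfc'
        _ ≤ (Qsum θ θh π 0 + (Real.sqrt S / α) * ∑ i ∈ Finset.range k, Wsum θ θh π i)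
              + (Real.sqrt S / α) * Wsum θ θh π k := add_le_add ih le_rfl
        _ = Qsum θ θh π 0 + (Real.sqrt S / α) * ∑ i ∈ Finset.range (k+1), Wsum θ θh π i := by
            rw [Finset.sum_range_succ]; ring
  have T3 : Wsum θ θh π n ≤ (Real.sqrt S / α) * Wsum θ θh π n := by
    nlinarith [Wsum_nonneg θ θh π n]
  have T4 : ∑ τ ∈ GammaF π (n+1), l1norm (θ.belief (n+1) τ - θh.belief (n+1) τ)
      ≤ Qsum θ θh π 0 + (Real.sqrt S / α) * ∑ k ∈ Finset.range (n+1), Wsum θ θh π k := by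
    calc ∑ τ ∈ GammaF π (n+1), l1norm (θ.belief (n+1) τ - θh.belief (n+1) τ)
        ≤ Qsum θ θh π n + Wsum θ θh π n := sum_delta_succ_le θ θh π n hfc'
      _ ≤ (Qsum θ θh π 0 + (Real.sqrt S / α) * ∑ i ∈ Finset.range n, Wsum θ θh π i)
            + (Real.sqrt S / α) * Wsum θ θh π n := add_le_add (T2 n) T3
      _ = Qsum θ θh π 0 + (Real.sqrt S / α) * ∑ k ∈ Finset.range (n+1), Wsum θ θh π k := by
          rw [Finset.sum_range_succ]; ring
  have T5 : ∑ k ∈ Finset.range (n+1), Wsum θ θh π k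
      = Wsum θ θh π 0 + ∑ k ∈ Finset.range n, Wsum θ θh π (k+1) := by
    rw [Finset.sum_range_succ']; ring
  have T6 : ∑ k ∈ Finset.range n, Wsum θ θh π (k+1)
      ≤ ∑ k ∈ Finset.range n, ∑ a : Fin A, ∑ a' : Fin A, ∑ o : Fin O, ∑ s : Fin S,
          Kterm θ θh k a a' o s * visitProb θ π (k+1) s :=
    Finset.sum_le_sum fun k _ => Wsum_succ_le θ θh π k hfc
  have T7 : ∑ k ∈ Finset.range n, (∑ a : Fin A, ∑ a' : Fin A, ∑ o : Fin O, ∑ s : Fin S,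
        Kterm θ θh k a a' o s * visitProb θ π (k+1) s)
      = ∑ j ∈ Finset.Icc 2 (n+1), ∑ a : Fin A, ∑ a' : Fin A, ∑ o : Fin O, ∑ s : Fin S,
          l1norm ((θh.Bop j a o - θ.Bop j a o).mulVec
              (fun i => (θ.Ob j * θ.T (j - 1) a') i s)) * visitProb θ π (j - 1) s := by
    refine Finset.sum_nbij' (fun k => k + 2) (fun j => j - 2) ?_ ?_ ?_ ?_ ?_
    · intro k hk
      simp only [Finset.mem_range] at hk
      simp only [Finset.mem_Icc]
      omega
    · intro j hj
      simp only [Finset.mem_Icc] at hj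
      simp only [Finset.mem_range]
      omega
    · intro k _; show k + 2 - 2 = k; omega
    · intro j hj
      simp only [Finset.mem_Icc] at hj
      show j - 2 + 2 = j
      omega
    · intro k _; rfl
  calc ∑ τ ∈ GammaF π (n+1), l1norm (θ.belief (n+1) τ - θh.belief (n+1) τ)
      ≤ Qsum θ θh π 0 + (Real.sqrt S / α) * ∑ k ∈ Finset.range (n+1), Wsum θ θh π k := T4
    _ = Qsum θ θh π 0 + (Real.sqrt S / α) * Wsum θ θh π 0
          + (Real.sqrt S / α) * ∑ k ∈ Finset.range n, Wsum θ θh π (k+1) := by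
        rw [T5]; ring
    _ ≤ (Real.sqrt S / α) * l1norm (θ.bvec0 - θh.bvec0)
        + (Real.sqrt S / α) *
            (∑ a : Fin A, ∑ o : Fin O,
              l1norm ((θh.Bop 1 a o - θ.Bop 1 a o).mulVec θ.bvec0))
        + (Real.sqrt S / α) *
            ∑ j ∈ Finset.Icc 2 (n+1), ∑ a : Fin A, ∑ a' : Fin A, ∑ o : Fin O, ∑ s : Fin S,
              l1norm ((θh.Bop j a o - θ.Bop j a o).mulVec
                  (fun i => (θ.Ob j * θ.T (j - 1) a') i s)) *
                visitProb θ π (j - 1) s := by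
        refine add_le_add (add_le_add (Qsum_zero_le θ θh π hα hσ)
          (mul_le_mul_of_nonneg_left (Wsum_zero_le θ θh π) hκ0))
          (mul_le_mul_of_nonneg_left (T6.trans (le_of_eq T7)) hκ0)
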